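/- arXiv:math/0002133 — 7 statements merged into one kernel-verified Lean document; each statement's English description precedes it below -/
import Mathlib

section
/- Let Δx > 0, x_j ∈ ℝ, x_{j±1/2} := x_j ± Δx/2, x_{j±1} := x_j ± Δx, and let P_i(x) = A_i + B_i(x − x_i) + (1/2)C_i(x − x_i)² for i ∈ {j−1, j, j+1} be quadratic polynomials. Let a₋, a₊ > 0, let f : ℝ → ℝ, and set u⁻_{j+1/2} := P_j(x_{j+1/2}), u⁺_{j+1/2} := P_{j+1}(x_{j+1/2}), u⁻_{j−1/2} := P_{j−1}(x_{j−1/2}), u⁺_{j−1/2} := P_j(x_{j−1/2}), and ū_j := A_j + (Δx²/24)C_j. Suppose F_{j+1/2,r}, F_{j+1/2,l}, F_{j−1/2,r}, F_{j−1/2,l} : (0, δ₀) → ℝ satisfy F_{j+1/2,r}(Δt)/Δt → f(u⁺_{j+1/2}), F_{j+1/2,l}(Δt)/Δt → f(u⁻_{j+1/2}), F_{j−1/2,r}(Δt)/Δt → f(u⁺_{j−1/2}), F_{j−1/2,l}(Δt)/Δt → f(u⁻_{j−1/2}) as Δt → 0⁺, and that B̃₋, B̃₊, C̃₋, C̃₊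 : (0, δ₀) → ℝ are bounded. Define, for Δt ∈ (0, δ₀) with Δt(a₋ + a₊) < Δx and λ := Δt/Δx: w̄_{j+1/2}(Δt) := (A_j + A_{j+1})/2 + ((Δx − a₊Δt)/4)(B_j − B_{j+1}) + (Δx²/16 − a₊ΔtΔx/8 + (a₊Δt)²/12)(C_j + C_{j+1}) − (1/(2a₊Δt))(F_{j+1/2,r}(Δt) − F_{j+1/2,l}(Δt)); w̄_{j−1/2}(Δt) := (A_{j−1} + A_j)/2 + ((Δx − a₋Δt)/4)(B_{j−1} − B_j) + (Δx²/16 − a₋ΔtΔx/8 + (a₋Δt)²/12)(C_{j−1} + C_j) − (1/(2a₋Δt))(F_{j−1/2,r}(Δt) − F_{j−1/2,l}(Δt)); w̄_j(Δt) := A_j + (Δt/2)(a₋ − a₊)B_j + [Δx²/24 − ΔtΔx(a₋ + a₊)/12 + Δt²(a₋² − a₋a₊ + a₊²)/6]C_j − (1/(Δx − Δt(a₋ + a₊)))(F_{j+1/2,l}(Δt) − F_{j−1/2,r}(Δt)); and ū^{new}(Δt) := λa₋ w̄_{j−1/2}(Δt) + (1 − λ(a₋ + a₊)) w̄_j(Δt)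 + λa₊ w̄_{j+1/2}(Δt) + (λΔt/2)(a₋² B̃₋(Δt) − a₊² B̃₊(Δt)) + (λΔt²/6)(a₋³ C̃₋(Δt) + a₊³ C̃₊(Δt)). Then lim_{Δt→0⁺} (ū^{new}(Δt) − ū_j)/Δt = −(H₊ − H₋)/Δx, where H₊ := (f(u⁺_{j+1/2}) + f(u⁻_{j+1/2}))/2 − (a₊/2)(u⁺_{j+1/2} − u⁻_{j+1/2}) and H₋ := (f(u⁺_{j−1/2}) + f(u⁻_{j−1/2}))/2 − (a₋/2)(u⁺_{j−1/2} − u⁻_{j−1/2}). -/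
/-!
Because `λa₋ + (1 - λ(a₋ + a₊)) + λa₊ = 1`, the quotient `(ū^{new} - ū_j)/Δt` splits into
`(a₋ w̄_{j-1/2} + a₊ w̄_{j+1/2} - (a₋ + a₊) ū_j)/Δx`, `(1 - λ(a₋ + a₊))(w̄_j - ū_j)/Δt` and
terms `Δt B̃`, `Δt² C̃` that vanish. The `1/Δt` in a fan average is cancelled by its weight `a±`,
and the `1/(Δx - Δt(a₋ + a₊))` in `w̄_j` by the weight `1 - λ(a₋ + a₊)`, so every piece is a
polynomial in `Δt` plus flux difference quotients; at `Δt = 0` the polynomial parts combine into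
the jumps `u⁺ - u⁻` of the numerical diffusion in `H±`.
-/

open Filter Topology

/-- `w̄_{j±1/2}`: the average over the Riemann fan of speed `a` at the interface between the
parabolas `A₁, B₁, C₁` (left) and `A₂, B₂, C₂` (right). -/
noncomputable def fanAverage (Δx a A₁ B₁ C₁ A₂ B₂ C₂ Δt Fr Fl : ℝ) : ℝ :=
  (A₁ + A₂) / 2 + ((Δx - a * Δt) / 4) * (B₁ - B₂)
    + (Δx ^ 2 / 16 - a * Δt * Δx / 8 + (a * Δt) ^ 2 / 12) * (C₁ + C₂)
    - (1 / (2 * a * Δt)) * (Fr - Fl)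

/-- `w̄_j`: the average over the smooth part of cell `j`, between the two Riemann fans. -/
noncomputable def smoothAverage (Δx am ap A B C Δt Fr Fl : ℝ) : ℝ :=
  A + (Δt / 2) * (am - ap) * B
    + (Δx ^ 2 / 24 - Δt * Δx * (am + ap) / 12 + Δt ^ 2 * (am ^ 2 - am * ap + ap ^ 2) / 6) * C
    - (1 / (Δx - Δt * (am + ap))) * (Fr - Fl)

lemma tendsto_nhdsGT_of_continuous {α : Type*} [TopologicalSpace α] {g : ℝ → α}
    (hg : Continuous g) (x₀ : ℝ) : Tendsto g (𝓝[>] x₀) (𝓝 (g x₀)) :=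
  hg.continuousAt.tendsto.mono_left nhdsWithin_le_nhds

lemma eventually_nhdsGT_mul_lt {Δx : ℝ} (hΔx : 0 < Δx) (s : ℝ) :
    ∀ᶠ t in 𝓝[>] (0 : ℝ), t * s < Δx := by
  have h : Tendsto (fun t : ℝ => t * s) (𝓝[>] 0) (𝓝 (0 * s)) :=
    tendsto_nhdsGT_of_continuous (by fun_prop) 0
  rw [zero_mul] at h
  exact h.eventually_lt_const hΔx

lemma tendsto_mul_of_forall_abs_le {δ₀ M : ℝ} (hδ₀ : 0 < δ₀) {g : ℝ → ℝ}
    (hg : ∀ t ∈ Set.Ioo 0 δ₀, |g t| ≤ M) :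
    Tendsto (fun t => t * g t) (𝓝[>] 0) (𝓝 0) := by
  refine (tendsto_nhdsWithin_of_tendsto_nhds tendsto_id).zero_mul_isBoundedUnder_le ?_
  exact isBoundedUnder_of_eventually_le (a := M)
    (eventually_of_mem (Ioo_mem_nhdsGT hδ₀) hg)

lemma tendsto_mul_fanAverage {Δx a A₁ B₁ C₁ A₂ B₂ C₂ fr fl : ℝ} {Fr Fl : ℝ → ℝ} (ha : a ≠ 0)
    (hFr : Tendsto (fun t => Fr t / t) (𝓝[>] 0) (𝓝 fr))
    (hFl : Tendsto (fun t => Fl t / t) (𝓝[>] 0) (𝓝 fl)) :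
    Tendsto (fun t => a * fanAverage Δx a A₁ B₁ C₁ A₂ B₂ C₂ t (Fr t) (Fl t)) (𝓝[>] 0)
      (𝓝 (a * ((A₁ + A₂) / 2 + Δx / 4 * (B₁ - B₂) + Δx ^ 2 / 16 * (C₁ + C₂))
        - (fr - fl) / 2)) := by
  have hpoly := tendsto_nhdsGT_of_continuous (g := fun t : ℝ => a * ((A₁ + A₂) / 2
    + ((Δx - a * t) / 4) * (B₁ - B₂)
    + (Δx ^ 2 / 16 - a * t * Δx / 8 + (a * t) ^ 2 / 12) * (C₁ + C₂))) (by fun_prop) 0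
  refine ((hpoly.sub ((hFr.sub hFl).div_const 2)).congr' ?_).trans (by simp)
  filter_upwards [self_mem_nhdsWithin] with t (ht : 0 < t)
  unfold fanAverage
  field_simp

lemma tendsto_smoothAverage_sub_div {Δx am ap A B C fr fl : ℝ} {Fr Fl : ℝ → ℝ} (hΔx : 0 < Δx)
    (hFr : Tendsto (fun t => Fr t / t) (𝓝[>] 0) (𝓝 fr))
    (hFl : Tendsto (fun t => Fl t / t) (𝓝[>] 0) (𝓝 fl)) :
    Tendsto (fun t => (1 - t / Δx * (am + ap))
        * (smoothAverage Δx am ap A B C t (Fr t) (Fl t) - (A + Δx ^ 2 / 24 * C)) / t) (𝓝[>] 0)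
      (𝓝 ((am - ap) / 2 * B - Δx * (am + ap) / 12 * C - (fr - fl) / Δx)) := by
  have hpoly := tendsto_nhdsGT_of_continuous (g := fun t : ℝ => (1 - t / Δx * (am + ap))
    * ((am - ap) / 2 * B - Δx * (am + ap) / 12 * C
      + t * (am ^ 2 - am * ap + ap ^ 2) / 6 * C)) (by fun_prop) 0
  refine ((hpoly.sub ((hFr.sub hFl).div_const Δx)).congr' ?_).trans (by simp)
  filter_upwards [self_mem_nhdsWithin, eventually_nhdsGT_mul_lt hΔx (am + ap)]
    with t (ht : 0 < t) hlt
  have hD : Δx - t * (am + ap) ≠ 0 := by linarith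
  unfold smoothAverage
  field_simp
  ring

lemma projection_sub_div {Δx t am ap wm wj wp u Bm Bp Cm Cp : ℝ} (hΔx : Δx ≠ 0) (ht : t ≠ 0) :
    ((t / Δx) * am * wm + (1 - (t / Δx) * (am + ap)) * wj + (t / Δx) * ap * wp
        + ((t / Δx) * t / 2) * (am ^ 2 * Bm - ap ^ 2 * Bp)
        + ((t / Δx) * t ^ 2 / 6) * (am ^ 3 * Cm + ap ^ 3 * Cp) - u) / t
      = (am * wm + ap * wp - (am + ap) * u) / Δx + (1 - t / Δx * (am + ap)) * (wj - u) / t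
        + (am ^ 2 * (t * Bm) - ap ^ 2 * (t * Bp)) / (2 * Δx)
        + t * (am ^ 3 * (t * Cm) + ap ^ 3 * (t * Cp)) / (6 * Δx) := by
  field_simp
  ring

/-- Derivation of the third-order semi-discrete central scheme as the
`Δt → 0⁺` limit of the fully-discrete scheme.  Here `Pm, Pj, Pp` are the
parabolic reconstructions in cells `j−1, j, j+1`; `Fpr, Fpl, Fmr, Fml` are the
time-integrals of the fluxes at the Riemann-fan edges, whose difference
quotients converge to the point flux values at the interfaces; `Btm, Btp, Ctm,
Ctp` are the (bounded) higher coefficients of the new reconstruction; `wp, wm,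
wj` are the evolved averages over the Riemann-fan and smooth control volumes;
and `unew` is the projected new cell average.  The limit of
`(ū^{new}(Δt) − ū_j)/Δt` is `−(H₊ − H₋)/Δx` with the semi-discrete numerical
fluxes `H±`. -/
theorem stmt_0 (Δx xj : ℝ) (hΔx : 0 < Δx)
    (Am Bm Cm Aj Bj Cj Ap Bp Cp : ℝ)
    (am ap : ℝ) (ham : 0 < am) (hap : 0 < ap)
    (f : ℝ → ℝ)
    (Pm Pj Pp : ℝ → ℝ)
    (hPm : ∀ x, Pm x = Am + Bm * (x - (xj - Δx)) + (1 / 2) * Cm * (x - (xj - Δx)) ^ 2)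
    (hPj : ∀ x, Pj x = Aj + Bj * (x - xj) + (1 / 2) * Cj * (x - xj) ^ 2)
    (hPp : ∀ x, Pp x = Ap + Bp * (x - (xj + Δx)) + (1 / 2) * Cp * (x - (xj + Δx)) ^ 2)
    (δ₀ : ℝ) (hδ₀ : 0 < δ₀)
    (Fpr Fpl Fmr Fml Btm Btp Ctm Ctp : ℝ → ℝ)
    (hFpr : Tendsto (fun Δt => Fpr Δt / Δt) (𝓝[>] 0) (𝓝 (f (Pp (xj + Δx / 2)))))
    (hFpl : Tendsto (fun Δt => Fpl Δt / Δt) (𝓝[>] 0) (𝓝 (f (Pj (xj + Δx / 2)))))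
    (hFmr : Tendsto (fun Δt => Fmr Δt / Δt) (𝓝[>] 0) (𝓝 (f (Pj (xj - Δx / 2)))))
    (hFml : Tendsto (fun Δt => Fml Δt / Δt) (𝓝[>] 0) (𝓝 (f (Pm (xj - Δx / 2)))))
    (hbdd : ∃ M : ℝ, ∀ Δt ∈ Set.Ioo (0 : ℝ) δ₀,
      |Btm Δt| ≤ M ∧ |Btp Δt| ≤ M ∧ |Ctm Δt| ≤ M ∧ |Ctp Δt| ≤ M)
    (wp wm wj unew : ℝ → ℝ)
    (hwp : ∀ Δt ∈ Set.Ioo (0 : ℝ) δ₀, Δt * (am + ap) < Δx →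
      wp Δt = (Aj + Ap) / 2 + ((Δx - ap * Δt) / 4) * (Bj - Bp)
        + (Δx ^ 2 / 16 - ap * Δt * Δx / 8 + (ap * Δt) ^ 2 / 12) * (Cj + Cp)
        - (1 / (2 * ap * Δt)) * (Fpr Δt - Fpl Δt))
    (hwm : ∀ Δt ∈ Set.Ioo (0 : ℝ) δ₀, Δt * (am + ap) < Δx →
      wm Δt = (Am + Aj) / 2 + ((Δx - am * Δt) / 4) * (Bm - Bj)
        + (Δx ^ 2 / 16 - am * Δt * Δx / 8 + (am * Δt) ^ 2 / 12) * (Cm + Cj)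
        - (1 / (2 * am * Δt)) * (Fmr Δt - Fml Δt))
    (hwj : ∀ Δt ∈ Set.Ioo (0 : ℝ) δ₀, Δt * (am + ap) < Δx →
      wj Δt = Aj + (Δt / 2) * (am - ap) * Bj
        + (Δx ^ 2 / 24 - Δt * Δx * (am + ap) / 12
            + Δt ^ 2 * (am ^ 2 - am * ap + ap ^ 2) / 6) * Cj
        - (1 / (Δx - Δt * (am + ap))) * (Fpl Δt - Fmr Δt))
    (hunew : ∀ Δt ∈ Set.Ioo (0 : ℝ) δ₀, Δt * (am + ap) < Δx →
      unew Δt = (Δt / Δx) * am * wm Δt + (1 - (Δt / Δx) * (am + ap)) * wj Δt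
        + (Δt / Δx) * ap * wp Δt
        + ((Δt / Δx) * Δt / 2) * (am ^ 2 * Btm Δt - ap ^ 2 * Btp Δt)
        + ((Δt / Δx) * Δt ^ 2 / 6) * (am ^ 3 * Ctm Δt + ap ^ 3 * Ctp Δt)) :
    Tendsto (fun Δt => (unew Δt - (Aj + (Δx ^ 2 / 24) * Cj)) / Δt) (𝓝[>] 0)
      (𝓝 (-(((f (Pp (xj + Δx / 2)) + f (Pj (xj + Δx / 2))) / 2
              - (ap / 2) * (Pp (xj + Δx / 2) - Pj (xj + Δx / 2)))
            - ((f (Pj (xj - Δx / 2)) + f (Pm (xj - Δx / 2))) / 2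
              - (am / 2) * (Pj (xj - Δx / 2) - Pm (xj - Δx / 2)))) / Δx)) := by
  obtain ⟨M, hM⟩ := hbdd
  have hBtm := tendsto_mul_of_forall_abs_le hδ₀ fun t ht => (hM t ht).1
  have hBtp := tendsto_mul_of_forall_abs_le hδ₀ fun t ht => (hM t ht).2.1
  have hCtm := tendsto_mul_of_forall_abs_le hδ₀ fun t ht => (hM t ht).2.2.1
  have hCtp := tendsto_mul_of_forall_abs_le hδ₀ fun t ht => (hM t ht).2.2.2
  have hfan_m := tendsto_mul_fanAverage (Δx := Δx) (A₁ := Am) (B₁ := Bm) (C₁ := Cm) (A₂ := Aj)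
    (B₂ := Bj) (C₂ := Cj) ham.ne' hFmr hFml
  have hfan_p := tendsto_mul_fanAverage (Δx := Δx) (A₁ := Aj) (B₁ := Bj) (C₁ := Cj) (A₂ := Ap)
    (B₂ := Bp) (C₂ := Cp) hap.ne' hFpr hFpl
  have hsmooth := tendsto_smoothAverage_sub_div (am := am) (ap := ap) (A := Aj) (B := Bj) (C := Cj)
    hΔx hFpl hFmr
  have hB := ((hBtm.const_mul (am ^ 2)).sub (hBtp.const_mul (ap ^ 2))).div_const (2 * Δx)
  have hC := ((tendsto_nhdsWithin_of_tendsto_nhds tendsto_id).mul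
    ((hCtm.const_mul (am ^ 3)).add (hCtp.const_mul (ap ^ 3)))).div_const (6 * Δx)
  have hlim := (((((hfan_m.add hfan_p).sub_const ((am + ap) * (Aj + Δx ^ 2 / 24 * Cj))).div_const
    Δx).add hsmooth).add hB).add hC
  convert hlim.congr' ?_ using 2
  · simp only [hPm, hPj, hPp]
    field_simp
    ring
  · filter_upwards [Ioo_mem_nhdsGT hδ₀, eventually_nhdsGT_mul_lt hΔx (am + ap)] with t ht hlt
    rw [hunew t ht hlt, hwm t ht hlt, hwj t ht hlt, hwp t ht hlt,
      projection_sub_div hΔx.ne' ht.1.ne']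
    rfl
end

section
/- Let Δx > 0, x_j ∈ ℝ, x_{j±1} := x_j ± Δx, and let ū_{j−1}, ū_j, ū_{j+1} ∈ ℝ. Then there is exactly one polynomial P of degree at most 2 satisfying (1/Δx)∫_{x_i−Δx/2}^{x_i+Δx/2} P(x) dx = ū_i for i ∈ {j−1, j, j+1}, namely P_EXACT(x) = u_j + u_j′(x − x_j) + (1/2)u_j″(x − x_j)², where u_j := ū_j − (1/24)(ū_{j+1} − 2ū_j + ū_{j−1}), u_j′ := (ū_{j+1} − ū_{j−1})/(2Δx), and u_j″ := (ū_{j+1} − 2ū_j + ū_{j−1})/Δx². -/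
/-!
Writing a quadratic as `a + b (x - x_j) + c (x - x_j)²`, its average over the cell of width
`Δx` centred at `x_j + k Δx` is `a + b k Δx + c (k² + 1/12) Δx²`. The three averages for
`k = -1, 0, 1` determine `(a, b, c)`: their first difference gives `b`, their second difference
gives `c`, and then the middle average gives `a`, which are the coefficients of `P_EXACT`.
-/

open MeasureTheory intervalIntegral Polynomial

noncomputable section

def cellAverage (h t : ℝ) (f : ℝ → ℝ) : ℝ :=
  (1 / h) * ∫ x in (t - h / 2)..(t + h / 2), f x

theorem integral_quadratic (a b c l u : ℝ) :
    ∫ x in l..u, (a + b * x + c * x ^ 2) =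
      a * (u - l) + b * (u ^ 2 - l ^ 2) / 2 + c * (u ^ 3 - l ^ 3) / 3 := by
  have hlin : IntervalIntegrable (fun x : ℝ => a + b * x) volume l u :=
    (continuous_const.add (continuous_const.mul continuous_id)).intervalIntegrable l u
  have hsq : IntervalIntegrable (fun x : ℝ => c * x ^ 2) volume l u :=
    (continuous_const.mul (continuous_pow 2)).intervalIntegrable l u
  have hid : IntervalIntegrable (fun x : ℝ => b * x) volume l u :=
    (continuous_const.mul continuous_id).intervalIntegrable l u
  rw [intervalIntegral.integral_add hlin hsq,
    intervalIntegral.integral_add intervalIntegrable_const hid, intervalIntegral.integral_const,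
    intervalIntegral.integral_const_mul, intervalIntegral.integral_const_mul, integral_id, integral_pow, smul_eq_mul]
  ring

theorem cellAverage_quadratic (a b c s t : ℝ) {h : ℝ} (hh : h ≠ 0) :
    cellAverage h t (fun x => a + b * (x - s) + c * (x - s) ^ 2) =
      a + b * (t - s) + c * ((t - s) ^ 2 + h ^ 2 / 12) := by
  unfold cellAverage
  rw [integral_comp_sub_right (fun y => a + b * y + c * y ^ 2) s, integral_quadratic]
  field_simp
  ring

theorem exists_eval_eq_quadratic {P : ℝ[X]} (hP : P.degree ≤ 2) (s : ℝ) :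
    ∃ a b c : ℝ, ∀ x, P.eval x = a + b * (x - s) + c * (x - s) ^ 2 := by
  have hn : P.natDegree < 3 := Nat.lt_succ_of_le (natDegree_le_iff_degree_le.mpr hP)
  refine ⟨P.coeff 0 + P.coeff 1 * s + P.coeff 2 * s ^ 2, P.coeff 1 + 2 * P.coeff 2 * s,
    P.coeff 2, fun x => ?_⟩
  rw [eval_eq_sum_range' hn]
  simp only [Finset.sum_range_succ, Finset.sum_range_zero]
  ring

/-- `P_EXACT` with `Δx = h`, `x_j = s` and `(ū_{j−1}, ū_j, ū_{j+1}) = (ubm, ub, ubp)`. -/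
def pExact (h s ubm ub ubp : ℝ) : ℝ[X] :=
  C (ub - (1 / 24) * (ubp - 2 * ub + ubm)) + C ((ubp - ubm) / (2 * h)) * (X - C s)
    + C ((1 / 2) * ((ubp - 2 * ub + ubm) / h ^ 2)) * (X - C s) ^ 2

theorem eval_pExact (h s ubm ub ubp x : ℝ) :
    (pExact h s ubm ub ubp).eval x =
      (ub - (1 / 24) * (ubp - 2 * ub + ubm)) + ((ubp - ubm) / (2 * h)) * (x - s)
        + (1 / 2) * ((ubp - 2 * ub + ubm) / h ^ 2) * (x - s) ^ 2 := by
  simp [pExact]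

theorem degree_pExact_le (h s ubm ub ubp : ℝ) : (pExact h s ubm ub ubp).degree ≤ 2 := by
  unfold pExact
  compute_degree

theorem cellAverages_pExact (s ubm ub ubp : ℝ) {h : ℝ} (hh : h ≠ 0) :
    cellAverage h (s - h) (fun x => (pExact h s ubm ub ubp).eval x) = ubm ∧
      cellAverage h s (fun x => (pExact h s ubm ub ubp).eval x) = ub ∧
      cellAverage h (s + h) (fun x => (pExact h s ubm ub ubp).eval x) = ubp := by
  simp only [eval_pExact, cellAverage_quadratic _ _ _ s _ hh]
  refine ⟨?_, ?_, ?_⟩ <;> field_simp <;> ring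

theorem eval_eq_eval_pExact_of_cellAverages {P : ℝ[X]} (hP : P.degree ≤ 2)
    {h s ubm ub ubp : ℝ} (hh : h ≠ 0)
    (hm : cellAverage h (s - h) (fun x => P.eval x) = ubm)
    (h0 : cellAverage h s (fun x => P.eval x) = ub)
    (hp : cellAverage h (s + h) (fun x => P.eval x) = ubp) (x : ℝ) :
    P.eval x = (pExact h s ubm ub ubp).eval x := by
  obtain ⟨a, b, c, hP⟩ := exists_eval_eq_quadratic hP s
  simp only [hP, cellAverage_quadratic a b c s _ hh] at hm h0 hp
  rw [hP, eval_pExact, ← hm, ← h0, ← hp]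
  field_simp
  ring

/-- There is exactly one polynomial of degree at most 2 conserving the three
cell averages `ū_{j−1}, ū_j, ū_{j+1}` on a uniform grid, namely
`P_EXACT(x) = u_j + u_j′ (x − x_j) + (1/2) u_j″ (x − x_j)²` with
`u_j = ū_j − (ū_{j+1} − 2ū_j + ū_{j−1})/24`, `u_j′ = (ū_{j+1} − ū_{j−1})/(2Δx)`,
`u_j″ = (ū_{j+1} − 2ū_j + ū_{j−1})/Δx²`. -/
theorem stmt_4 (Δx xj ubm ub ubp : ℝ) (hΔx : 0 < Δx) :
    (∃! P : Polynomial ℝ, P.degree ≤ 2 ∧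
      (1 / Δx) * (∫ x in ((xj - Δx) - Δx / 2)..((xj - Δx) + Δx / 2), P.eval x) = ubm ∧
      (1 / Δx) * (∫ x in (xj - Δx / 2)..(xj + Δx / 2), P.eval x) = ub ∧
      (1 / Δx) * (∫ x in ((xj + Δx) - Δx / 2)..((xj + Δx) + Δx / 2), P.eval x) = ubp) ∧
    (∀ P : Polynomial ℝ, P.degree ≤ 2 →
      (1 / Δx) * (∫ x in ((xj - Δx) - Δx / 2)..((xj - Δx) + Δx / 2), P.eval x) = ubm →
      (1 / Δx) * (∫ x in (xj - Δx / 2)..(xj + Δx / 2), P.eval x) = ub →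
      (1 / Δx) * (∫ x in ((xj + Δx) - Δx / 2)..((xj + Δx) + Δx / 2), P.eval x) = ubp →
      ∀ x : ℝ, P.eval x =
        (ub - (1 / 24) * (ubp - 2 * ub + ubm))
          + ((ubp - ubm) / (2 * Δx)) * (x - xj)
          + (1 / 2) * ((ubp - 2 * ub + ubm) / Δx ^ 2) * (x - xj) ^ 2) := by
  have hh : Δx ≠ 0 := hΔx.ne'
  have hval : ∀ P : ℝ[X], P.degree ≤ 2 →
      cellAverage Δx (xj - Δx) (fun x => P.eval x) = ubm →
      cellAverage Δx xj (fun x => P.eval x) = ub →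
      cellAverage Δx (xj + Δx) (fun x => P.eval x) = ubp →
      ∀ x, P.eval x = (pExact Δx xj ubm ub ubp).eval x :=
    fun P hP hm h0 hp => eval_eq_eval_pExact_of_cellAverages hP hh hm h0 hp
  refine ⟨⟨pExact Δx xj ubm ub ubp,
      ⟨degree_pExact_le Δx xj ubm ub ubp, cellAverages_pExact xj ubm ub ubp hh⟩,
      fun P ⟨hP, hm, h0, hp⟩ => Polynomial.funext (hval P hP hm h0 hp)⟩, ?_⟩
  intro P hP hm h0 hp x
  rw [hval P hP hm h0 hp, eval_pExact]

end
end

section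
/- Let Δx > 0, x_j ∈ ℝ, and ū_{j−1}, ū_j, ū_{j+1} ∈ ℝ. Define P_R(x) := ū_j + ((ū_{j+1} − ū_j)/Δx)(x − x_j), P_L(x) := ū_j + ((ū_j − ū_{j−1})/Δx)(x − x_j), P_C(x) := ū_j − (1/12)(ū_{j+1} − 2ū_j + ū_{j−1}) + ((ū_{j+1} − ū_{j−1})/(2Δx))(x − x_j) + ((ū_{j+1} − 2ū_j + ū_{j−1})/Δx²)(x − x_j)², and P_EXACT(x) := u_j + u_j′(x − x_j) + (1/2)u_j″(x − x_j)² with u_j := ū_j − (1/24)(ū_{j+1} − 2ū_j + ū_{j−1}), u_j′ := (ū_{j+1} − ū_{j−1})/(2Δx), u_j″ := (ū_{j+1} − 2ū_j + ū_{j−1})/Δx². Then for all x ∈ ℝ, P_EXACT(x) = (1/4)P_L(x) + (1/4)P_R(x) + (1/2)P_C(x). -/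
theorem stmt_5_general (Δx xj ubm ub ubp : ℝ)
    (PR PL PC PEXACT : ℝ → ℝ)
    (hPR : ∀ x, PR x = ub + ((ubp - ub) / Δx) * (x - xj))
    (hPL : ∀ x, PL x = ub + ((ub - ubm) / Δx) * (x - xj))
    (hPC : ∀ x, PC x = ub - (1 / 12) * (ubp - 2 * ub + ubm)
      + ((ubp - ubm) / (2 * Δx)) * (x - xj)
      + ((ubp - 2 * ub + ubm) / Δx ^ 2) * (x - xj) ^ 2)
    (hPE : ∀ x, PEXACT x = (ub - (1 / 24) * (ubp - 2 * ub + ubm))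
      + ((ubp - ubm) / (2 * Δx)) * (x - xj)
      + (1 / 2) * ((ubp - 2 * ub + ubm) / Δx ^ 2) * (x - xj) ^ 2) :
    ∀ x : ℝ, PEXACT x = (1 / 4) * PL x + (1 / 4) * PR x + (1 / 2) * PC x := by
  intro x
  rw [hPE, hPL, hPR, hPC]
  ring

/-- The exact parabola `P_EXACT` is the convex combination
`(1/4)P_L + (1/4)P_R + (1/2)P_C` of the one-sided linear reconstructions and the
centered parabola of the CWENO reconstruction (with `c_L = c_R = 1/4`). -/
theorem stmt_5 (Δx xj ubm ub ubp : ℝ) (hΔx : 0 < Δx)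
    (PR PL PC PEXACT : ℝ → ℝ)
    (hPR : ∀ x, PR x = ub + ((ubp - ub) / Δx) * (x - xj))
    (hPL : ∀ x, PL x = ub + ((ub - ubm) / Δx) * (x - xj))
    (hPC : ∀ x, PC x = ub - (1 / 12) * (ubp - 2 * ub + ubm)
      + ((ubp - ubm) / (2 * Δx)) * (x - xj)
      + ((ubp - 2 * ub + ubm) / Δx ^ 2) * (x - xj) ^ 2)
    (hPE : ∀ x, PEXACT x = (ub - (1 / 24) * (ubp - 2 * ub + ubm))
      + ((ubp - ubm) / (2 * Δx)) * (x - xj)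
      + (1 / 2) * ((ubp - 2 * ub + ubm) / Δx ^ 2) * (x - xj) ^ 2) :
    ∀ x : ℝ, PEXACT x = (1 / 4) * PL x + (1 / 4) * PR x + (1 / 2) * PC x :=
  stmt_5_general Δx xj ubm ub ubp PR PL PC PEXACT hPR hPL hPC hPE
end

section
/- Let Δx > 0, x_j ∈ ℝ, x_{j±1/2} := x_j ± Δx/2, and ū_{j−1}, ū_j, ū_{j+1} ∈ ℝ. For a polynomial P define IS(P) := Σ_{l=1}^{2} ∫_{x_{j−1/2}}^{x_{j+1/2}} Δx^{2l−1} (P^{(l)}(x))² dx. Then for the centered parabola P_C(x) := ū_j − (1/12)(ū_{j+1} − 2ū_j + ū_{j−1}) + ((ū_{j+1} − ū_{j−1})/(2Δx))(x − x_j) + ((ū_{j+1} − 2ū_j + ū_{j−1})/Δx²)(x − x_j)², one has IS(P_C) = (13/3)(ū_{j+1} − 2ū_j + ū_{j−1})² + (1/4)(ū_{j+1} − ū_{j−1})². -/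
open MeasureTheory intervalIntegral

/-! On the cell the parabola has slope `a + 2b(x - x_j)` and curvature `2b`, with
`a = (ū_{j+1} - ū_{j-1}) / (2Δx)` and `b = (ū_{j+1} - 2ū_j + ū_{j-1}) / Δx²`. Over a cell of
length `Δx` centred at `x_j` the cross term `4ab(x - x_j)` integrates to zero, so
`IS(P_C) = Δx (a²Δx + b²Δx³/3) + Δx³ · 4b² · Δx = a²Δx² + (13/3) b²Δx⁴`,
and substituting `a` and `b` gives the claim. -/

theorem deriv_centered_quadratic (p q r c : ℝ) :
    deriv (fun x : ℝ => p + q * (x - c) + r * (x - c) ^ 2)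
      = fun x => q + 2 * r * (x - c) := by
  funext x
  have hx : HasDerivAt (fun x : ℝ => x - c) 1 x := (hasDerivAt_id x).sub_const c
  exact (((hx.const_mul q).const_add p).add ((hx.pow 2).const_mul r)).deriv.trans (by ring)

theorem deriv_centered_linear (q r c : ℝ) :
    deriv (fun x : ℝ => q + 2 * r * (x - c)) = fun _ => 2 * r := by
  funext x
  exact ((((hasDerivAt_id x).sub_const c).const_mul (2 * r)).const_add q).deriv.trans (by ring)

theorem integral_centered_linear_sq (q r c h : ℝ) :
    ∫ x in (c - h / 2)..(c + h / 2), (q + 2 * r * (x - c)) ^ 2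
      = q ^ 2 * h + r ^ 2 * h ^ 3 / 3 := by
  rw [intervalIntegral.integral_comp_sub_right (fun t => (q + 2 * r * t) ^ 2)]
  have expand : (fun t : ℝ => (q + 2 * r * t) ^ 2)
      = fun t => q ^ 2 + 4 * q * r * t + 4 * r ^ 2 * t ^ 2 := by
    funext t; ring
  have hint : ∀ f : ℝ → ℝ, Continuous f → IntervalIntegrable f volume (-(h / 2)) (h / 2) :=
    fun f hf => hf.intervalIntegrable _ _
  simp only [add_sub_cancel_left, sub_sub_cancel_left, expand]
  rw [intervalIntegral.integral_add (hint _ (by fun_prop)) (hint _ (by fun_prop)),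
    intervalIntegral.integral_add (hint _ (by fun_prop)) (hint _ (by fun_prop)),
    intervalIntegral.integral_const_mul, intervalIntegral.integral_const_mul, integral_pow,
    integral_id, intervalIntegral.integral_const]
  simp only [smul_eq_mul]
  ring

/-- The CWENO smoothness indicator of the centered parabola:
`IS(P_C) = (13/3)(ū_{j+1} − 2ū_j + ū_{j−1})² + (1/4)(ū_{j+1} − ū_{j−1})²`,
where `IS(P) = Σ_{l=1}^{2} ∫_{x_{j−1/2}}^{x_{j+1/2}} Δx^{2l−1} (P^{(l)}(x))² dx`. -/
theorem stmt_7 (Δx xj ubm ub ubp : ℝ) (hΔx : 0 < Δx)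
    (PC : ℝ → ℝ)
    (hPC : ∀ x, PC x = ub - (1 / 12) * (ubp - 2 * ub + ubm)
      + ((ubp - ubm) / (2 * Δx)) * (x - xj)
      + ((ubp - 2 * ub + ubm) / Δx ^ 2) * (x - xj) ^ 2) :
    ((∫ x in (xj - Δx / 2)..(xj + Δx / 2), Δx ^ (2 * 1 - 1) * (deriv PC x) ^ 2)
      + ∫ x in (xj - Δx / 2)..(xj + Δx / 2),
          Δx ^ (2 * 2 - 1) * (deriv (deriv PC) x) ^ 2)
      = (13 / 3) * (ubp - 2 * ub + ubm) ^ 2 + (1 / 4) * (ubp - ubm) ^ 2 := by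
  set a := (ubp - ubm) / (2 * Δx)
  set b := (ubp - 2 * ub + ubm) / Δx ^ 2
  have hPC' : PC = fun x => ub - (1 / 12) * (ubp - 2 * ub + ubm) + a * (x - xj)
      + b * (x - xj) ^ 2 := funext hPC
  have hslope : deriv PC = fun x => a + 2 * b * (x - xj) := by
    rw [hPC']; exact deriv_centered_quadratic _ a b xj
  have hcurv : deriv (deriv PC) = fun _ => 2 * b := by
    rw [hslope]; exact deriv_centered_linear a b xj
  rw [hcurv, hslope, intervalIntegral.integral_const_mul, integral_centered_linear_sq,
    intervalIntegral.integral_const, smul_eq_mul]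
  simp only [a, b]
  field_simp
  ring
end

section
/- Let Δx > 0, x_j ∈ ℝ, x_{j+1} := x_j + Δx, x_{j+1/2} := x_j + Δx/2, and let P_j(x) = A_j + B_j(x − x_j) + (1/2)C_j(x − x_j)² and P_{j+1}(x) = A_{j+1} + B_{j+1}(x − x_{j+1}) + (1/2)C_{j+1}(x − x_{j+1})² be quadratic polynomials. Then for every a > 0 and Δt > 0, (1/(2aΔt)) [ ∫_{x_{j+1/2} − aΔt}^{x_{j+1/2}} P_j(x) dx + ∫_{x_{j+1/2}}^{x_{j+1/2} + aΔt} P_{j+1}(x) dx ] = (A_j + A_{j+1})/2 + ((Δx − aΔt)/4)(B_j − B_{j+1}) + (Δx²/16 − aΔtΔx/8 + (aΔt)²/12)(C_j + C_{j+1}). -/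
open MeasureTheory intervalIntegral

theorem integral_quadratic_sub (A B C c u v : ℝ) :
    ∫ x in u..v, (A + B * (x - c) + 1 / 2 * C * (x - c) ^ 2)
      = A * (v - u) + B / 2 * ((v - c) ^ 2 - (u - c) ^ 2)
        + C / 6 * ((v - c) ^ 3 - (u - c) ^ 3) := by
  have hint {f : ℝ → ℝ} (hf : Continuous f) : IntervalIntegrable f volume (u - c) (v - c) :=
    hf.intervalIntegrable _ _
  rw [integral_comp_sub_right (fun y => A + B * y + 1 / 2 * C * y ^ 2),
    integral_add (hint (by fun_prop)) (hint (by fun_prop)),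
    integral_add (hint (by fun_prop)) (hint (by fun_prop)),
    intervalIntegral.integral_const_mul, intervalIntegral.integral_const_mul,
    intervalIntegral.integral_const, integral_id, integral_pow, smul_eq_mul]
  ring

theorem stmt_8_general (Δx xj Aj Bj Cj Ap Bp Cp : ℝ)
    (Pj Pjp : ℝ → ℝ)
    (hPj : ∀ x, Pj x = Aj + Bj * (x - xj) + (1 / 2) * Cj * (x - xj) ^ 2)
    (hPjp : ∀ x, Pjp x = Ap + Bp * (x - (xj + Δx)) + (1 / 2) * Cp * (x - (xj + Δx)) ^ 2) :
    ∀ a Δt : ℝ, 0 < a → 0 < Δt →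
      (1 / (2 * a * Δt)) *
        ((∫ x in ((xj + Δx / 2) - a * Δt)..(xj + Δx / 2), Pj x)
          + ∫ x in (xj + Δx / 2)..((xj + Δx / 2) + a * Δt), Pjp x)
      = (Aj + Ap) / 2 + ((Δx - a * Δt) / 4) * (Bj - Bp)
        + (Δx ^ 2 / 16 - a * Δt * Δx / 8 + (a * Δt) ^ 2 / 12) * (Cj + Cp) := by
  intro a Δt ha hΔt
  simp only [hPj, hPjp, integral_quadratic_sub]
  field_simp
  ring

/-- The exact average of the piecewise-parabolic reconstruction over the
Riemann-fan control volume `[x_{j+1/2} − aΔt, x_{j+1/2} + aΔt]`. -/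
theorem stmt_8 (Δx xj Aj Bj Cj Ap Bp Cp : ℝ) (hΔx : 0 < Δx)
    (Pj Pjp : ℝ → ℝ)
    (hPj : ∀ x, Pj x = Aj + Bj * (x - xj) + (1 / 2) * Cj * (x - xj) ^ 2)
    (hPjp : ∀ x, Pjp x = Ap + Bp * (x - (xj + Δx)) + (1 / 2) * Cp * (x - (xj + Δx)) ^ 2) :
    ∀ a Δt : ℝ, 0 < a → 0 < Δt →
      (1 / (2 * a * Δt)) *
        ((∫ x in ((xj + Δx / 2) - a * Δt)..(xj + Δx / 2), Pj x)
          + ∫ x in (xj + Δx / 2)..((xj + Δx / 2) + a * Δt), Pjp x)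
      = (Aj + Ap) / 2 + ((Δx - a * Δt) / 4) * (Bj - Bp)
        + (Δx ^ 2 / 16 - a * Δt * Δx / 8 + (a * Δt) ^ 2 / 12) * (Cj + Cp) :=
  stmt_8_general Δx xj Aj Bj Cj Ap Bp Cp Pj Pjp hPj hPjp
end

section
/- Let u : ℝ → ℝ be five times continuously differentiable and let x ∈ ℝ. Then (1/(12h))[3u(x+2h) + 10u(x+h) − 18u(x) + 6u(x−h) − u(x−2h)] − u′(x+h) = O(h⁴) as h → 0; that is, there exist constants C > 0 and δ > 0 such that for all h with 0 < |h| < δ, |(1/(12h))[3u(x+2h) + 10u(x+h) − 18u(x) + 6u(x−h) − u(x−2h)] − u′(x+h)| ≤ C h⁴. -/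
/-!
Expand `u (x + a h)` for `a = 2, 1, 0, -1, -2` to order five and `u′ (x + h)` to order four,
with little-o remainders. On the Taylor polynomials the stencil is exact except for the `h⁴`
term, which leaves `u⁽⁵⁾(x) h⁴ / 20`; dividing the `o(h⁵)` remainders by `12 h` makes them
`o(h⁴)`. Hence the error is `O(h⁴)` on the punctured neighbourhood of `0`.
-/

open Asymptotics Filter Finset Topology Set

theorem Asymptotics.IsBigO.exists_pos_bound_punctured {α E F : Type*} [PseudoMetricSpace α]
    [Norm E] [SeminormedAddCommGroup F] {f : α → E} {g : α → F} {a : α} (hfg : f =O[𝓝[≠] a] g) :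
    ∃ C > (0 : ℝ), ∃ δ > (0 : ℝ), ∀ y, 0 < dist y a → dist y a < δ → ‖f y‖ ≤ C * ‖g y‖ := by
  obtain ⟨C, hC, hCfg⟩ := hfg.exists_pos
  obtain ⟨δ, hδ, hball⟩ := Metric.eventually_nhds_iff.mp (eventually_nhdsWithin_iff.mp hCfg.bound)
  exact ⟨C, hC, δ, hδ, fun y hy0 hyδ ↦ hball hyδ (by rintro rfl; simp at hy0)⟩

theorem taylor_isLittleO_comp_mul {E : Type*} [NormedAddCommGroup E] [NormedSpace ℝ E]
    {f : ℝ → E} {n : ℕ} (hf : ContDiff ℝ n f) (x a : ℝ) :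
    (fun h ↦ f (x + a * h) - taylorWithinEval f n univ x (x + a * h)) =o[𝓝 0] fun h ↦ h ^ n := by
  have hlin : Tendsto (fun h : ℝ ↦ x + a * h) (𝓝 0) (𝓝 x) := by
    simpa using ((continuous_const_mul a).const_add x).tendsto 0
  refine ((taylor_isLittleO_univ hf).comp_tendsto hlin).trans_isBigO ?_
  simpa only [Function.comp_def, add_sub_cancel_left, mul_pow] using
    isBigO_const_mul_self (a ^ n) (fun h : ℝ ↦ h ^ n) (𝓝 0)

theorem isLittleO_inv_mul_of_isLittleO_pow_succ {G : ℝ → ℝ} {n : ℕ}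
    (hG : G =o[𝓝 0] fun h ↦ h ^ (n + 1)) : (fun h ↦ h⁻¹ * G h) =o[𝓝[≠] 0] fun h ↦ h ^ n := by
  refine ((isBigO_refl (fun h : ℝ ↦ h⁻¹) _).mul_isLittleO (hG.mono nhdsWithin_le_nhds)).congr'
    EventuallyEq.rfl (eventually_nhdsWithin_of_forall fun h hh ↦ ?_)
  change h⁻¹ * h ^ (n + 1) = h ^ n
  rw [pow_succ', inv_mul_cancel_left₀ hh]

/-- `(u_x)_{j+1,j}` of the scheme, with `x = x_j` and `h = Δx`. -/
noncomputable def fourthOrderDiffQuot (u : ℝ → ℝ) (x h : ℝ) : ℝ :=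
  1 / (12 * h) * (3 * u (x + 2 * h) + 10 * u (x + h) - 18 * u x + 6 * u (x - h) - u (x - 2 * h))

/- The stencil weights `(3, 10, -18, 6, -1)` at offsets `(2, 1, 0, -1, -2)` have moments
`∑ c a ^ k = 12 k` for `k ≤ 4`, but `132 ≠ 60` for `k = 5`: `132 / (12 · 5!) - 1 / 4! = 1 / 20`. -/
theorem fourthOrderDiffQuot_taylor_sub (u : ℝ → ℝ) (x : ℝ) {h : ℝ} (hh : h ≠ 0) :
    fourthOrderDiffQuot (taylorWithinEval u 5 univ x) x h
      - taylorWithinEval (deriv u) 4 univ x (x + h) = iteratedDeriv 5 u x * h ^ 4 / 20 := by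
  simp only [fourthOrderDiffQuot, taylor_within_apply, iteratedDerivWithin_univ,
    ← iteratedDeriv_succ', sum_range_succ, sum_range_zero, smul_eq_mul, Nat.factorial]
  field_simp
  ring

theorem fourthOrderDiffQuot_sub_deriv_isBigO {u : ℝ → ℝ} (hu : ContDiff ℝ 5 u) (x : ℝ) :
    (fun h ↦ fourthOrderDiffQuot u x h - deriv u (x + h)) =O[𝓝[≠] 0] fun h ↦ h ^ 4 := by
  set T := taylorWithinEval u 5 univ x
  set R : ℝ → ℝ → ℝ := fun a h ↦ h⁻¹ * (u (x + a * h) - T (x + a * h))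
  have hR : ∀ a, R a =o[𝓝[≠] 0] fun h ↦ h ^ 4 := fun a ↦
    isLittleO_inv_mul_of_isLittleO_pow_succ (taylor_isLittleO_comp_mul hu x a)
  have hS : (fun h ↦ deriv u (x + 1 * h) - taylorWithinEval (deriv u) 4 univ x (x + 1 * h))
      =o[𝓝[≠] 0] fun h ↦ h ^ 4 :=
    (taylor_isLittleO_comp_mul hu.deriv' x 1).mono nhdsWithin_le_nhds
  have hlead : (fun h : ℝ ↦ iteratedDeriv 5 u x / 20 * h ^ 4) =O[𝓝[≠] 0] fun h ↦ h ^ 4 :=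
    isBigO_const_mul_self _ _ _
  have hsplit : ∀ h ≠ 0, fourthOrderDiffQuot u x h - deriv u (x + h) =
      1 / 12 * (3 * R 2 h + 10 * R 1 h + 6 * R (-1) h - R (-2) h)
        - (deriv u (x + 1 * h) - taylorWithinEval (deriv u) 4 univ x (x + 1 * h))
        + iteratedDeriv 5 u x / 20 * h ^ 4 := by
    intro h hh
    have hT := fourthOrderDiffQuot_taylor_sub u x hh
    simp only [fourthOrderDiffQuot, taylorWithinEval_self] at hT
    simp only [fourthOrderDiffQuot, R, one_mul, neg_mul, ← sub_eq_add_neg]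
    linear_combination hT
  refine IsBigO.congr' ?_ (eventually_nhdsWithin_of_forall fun h hh ↦ (hsplit h hh).symm)
    EventuallyEq.rfl
  exact (((((hR 2).const_mul_left 3).add ((hR 1).const_mul_left 10)).add
    ((hR (-1)).const_mul_left 6)).sub (hR (-2))).const_mul_left (1 / 12) |>.sub hS
    |>.isBigO.add hlead

/-- The finite-difference formula
`(u_x)_{j+1,j} = (3u_{j+2} + 10u_{j+1} − 18u_j + 6u_{j−1} − u_{j−2})/(12Δx)`
approximates `u′` at `x + h` to fourth order for `u ∈ C⁵`. -/
theorem stmt_15 (u : ℝ → ℝ) (hu : ContDiff ℝ 5 u) (x : ℝ) :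
    ∃ C > (0 : ℝ), ∃ δ > (0 : ℝ), ∀ h : ℝ, 0 < |h| → |h| < δ →
      |(1 / (12 * h)) * (3 * u (x + 2 * h) + 10 * u (x + h) - 18 * u x
          + 6 * u (x - h) - u (x - 2 * h))
        - deriv u (x + h)| ≤ C * h ^ 4 := by
  obtain ⟨C, hC, δ, hδ, hbound⟩ :=
    (fourthOrderDiffQuot_sub_deriv_isBigO hu x).exists_pos_bound_punctured
  refine ⟨C, hC, δ, hδ, fun h h0 hhδ ↦ ?_⟩
  rw [← Real.dist_0_eq_abs] at h0 hhδ
  simpa only [fourthOrderDiffQuot, Real.norm_eq_abs, abs_of_nonneg (by positivity : 0 ≤ h ^ 4)]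
    using hbound h h0 hhδ
end

section
/- Let u : ℝ → ℝ be five times continuously differentiable and let x ∈ ℝ. Then (1/(12h))[25u(x+2h) − 48u(x+h) + 36u(x) − 16u(x−h) + 3u(x−2h)] − u′(x+2h) = O(h⁴) as h → 0; that is, there exist constants C > 0 and δ > 0 such that for all h with 0 < |h| < δ, |(1/(12h))[25u(x+2h) − 48u(x+h) + 36u(x) − 16u(x−h) + 3u(x−2h)] − u′(x+2h)| ≤ C h⁴. -/
/-!
Expand `u` by Taylor's theorem (Lagrange remainder, order 5) about `x + 2h`, the point where the
derivative is taken, rather than about `x`. The stencil weights `25, -48, 36, -16, 3` at the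
offsets `0, -h, -2h, -3h, -4h` annihilate `1, v², v³, v⁴` and send `v` to `12h`, so the stencil
equals `12h u'(x + 2h)` up to the five remainders, each `O(|h|⁵)`; dividing by `12h` leaves `O(h⁴)`.
-/

open Set Finset
open scoped Nat

theorem abs_sub_taylor_le {f : ℝ → ℝ} {n : ℕ} (hf : ContDiff ℝ (n + 1) f) {x₀ x M : ℝ}
    (hM : ∀ y ∈ uIcc x₀ x, |iteratedDeriv (n + 1) f y| ≤ M) :
    |f x - ∑ k ∈ range (n + 1), iteratedDeriv k f x₀ / k ! * (x - x₀) ^ k|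
      ≤ M * |x - x₀| ^ (n + 1) / (n + 1)! := by
  rcases eq_or_ne x₀ x with rfl | hx
  · simp [Finset.sum_range_succ']
  obtain ⟨ξ, hξ, hrem⟩ := taylor_mean_remainder_lagrange_iteratedDeriv hx hf.contDiffOn
  have htaylor : taylorWithinEval f n (uIcc x₀ x) x₀ x
      = ∑ k ∈ range (n + 1), iteratedDeriv k f x₀ / k ! * (x - x₀) ^ k := by
    rw [taylor_within_apply]
    refine Finset.sum_congr rfl fun k hk => ?_
    have hk : (k : WithTop ℕ∞) ≤ n + 1 := by
      exact_mod_cast (Finset.mem_range.mp hk).le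
    rw [iteratedDerivWithin_eq_iteratedDeriv (uniqueDiffOn_uIcc hx) (hf.of_le hk).contDiffAt
      left_mem_uIcc, smul_eq_mul]
    ring
  rw [← htaylor, hrem, abs_div, abs_mul, abs_pow, Nat.abs_cast]
  gcongr
  exact hM ξ (uIoo_subset_uIcc_self hξ)

theorem abs_stencil_sub_deriv_le {u : ℝ → ℝ} (hu : ContDiff ℝ 5 u) {x h M : ℝ}
    (hM : ∀ y ∈ Metric.closedBall x (2 * |h|), |iteratedDeriv 5 u y| ≤ M) :
    |25 * u (x + 2 * h) - 48 * u (x + h) + 36 * u x - 16 * u (x - h) + 3 * u (x - 2 * h)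
        - 12 * h * deriv u (x + 2 * h)| ≤ 68 * M * |h| ^ 5 := by
  set T : ℝ → ℝ := fun v => ∑ k ∈ range 5, iteratedDeriv k u (x + 2 * h) / k ! * v ^ k
  have hT : 25 * T 0 - 48 * T (-h) + 36 * T (-(2 * h)) - 16 * T (-(3 * h)) + 3 * T (-(4 * h))
      = 12 * h * deriv u (x + 2 * h) := by
    simp only [T, Finset.sum_range_succ, Finset.sum_range_zero, iteratedDeriv_one]
    norm_num [Nat.factorial]
    ring
  have hball : ∀ m : ℝ, 0 ≤ m → m ≤ 4 → uIcc (x + 2 * h) (x + 2 * h - m * h)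
      ⊆ Metric.closedBall x (2 * |h|) := by
    intro m hm0 hm4
    have hshift : |(2 - m) * h| ≤ 2 * |h| := by
      rw [abs_mul]
      exact mul_le_mul_of_nonneg_right (abs_le.2 ⟨by linarith, by linarith⟩) (abs_nonneg h)
    rw [Real.closedBall_eq_Icc]
    refine uIcc_subset_Icc ⟨?_, ?_⟩ ⟨?_, ?_⟩ <;>
      linarith [abs_le.1 hshift, le_abs_self h, neg_abs_le h]
  have hremainder : ∀ m : ℝ, 0 ≤ m → m ≤ 4 →
      |u (x + 2 * h - m * h) - T (-(m * h))| ≤ M * m ^ 5 * |h| ^ 5 / 120 := by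
    intro m hm0 hm4
    have := abs_sub_taylor_le (n := 4) hu fun y hy => hM y (hball m hm0 hm4 hy)
    rw [show x + 2 * h - m * h - (x + 2 * h) = -(m * h) by ring, abs_neg, abs_mul,
      abs_of_nonneg hm0] at this
    convert this using 1
    norm_num [Nat.factorial]
    ring
  have e0 : T 0 = u (x + 2 * h) := by simp [T, Finset.sum_range_succ]
  have e1 := hremainder 1 zero_le_one (by norm_num)
  have e2 := hremainder 2 zero_le_two (by norm_num)
  have e3 := hremainder 3 (by norm_num) (by norm_num)
  have e4 := hremainder 4 (by norm_num) le_rfl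
  rw [show x + 2 * h - 1 * h = x + h by ring, one_mul] at e1
  rw [show x + 2 * h - 2 * h = x by ring] at e2
  rw [show x + 2 * h - 3 * h = x - h by ring] at e3
  rw [show x + 2 * h - 4 * h = x - 2 * h by ring] at e4
  -- `68 = (48 * 1 + 36 * 2 ^ 5 + 16 * 3 ^ 5 + 3 * 4 ^ 5) / 5!`
  rw [← hT, abs_le]
  constructor <;> linarith [e0, abs_le.1 e1, abs_le.1 e2, abs_le.1 e3, abs_le.1 e4]

/-- The one-sided finite-difference formula
`(u_x)_{j+2,j} = (25u_{j+2} − 48u_{j+1} + 36u_j − 16u_{j−1} + 3u_{j−2})/(12Δx)`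
approximates `u′` at `x + 2h` to fourth order for `u ∈ C⁵`. -/
theorem stmt_16 (u : ℝ → ℝ) (hu : ContDiff ℝ 5 u) (x : ℝ) :
    ∃ C > (0 : ℝ), ∃ δ > (0 : ℝ), ∀ h : ℝ, 0 < |h| → |h| < δ →
      |(1 / (12 * h)) * (25 * u (x + 2 * h) - 48 * u (x + h) + 36 * u x
          - 16 * u (x - h) + 3 * u (x - 2 * h))
        - deriv u (x + 2 * h)| ≤ C * h ^ 4 := by
  obtain ⟨M, hM⟩ := (isCompact_closedBall x 2).exists_bound_of_continuousOn
    (hu.continuous_iteratedDeriv 5 le_rfl).continuousOn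
  have hM0 : 0 ≤ M := (norm_nonneg _).trans (hM x (Metric.mem_closedBall_self zero_le_two))
  refine ⟨6 * M + 1, by positivity, 1, one_pos, fun h hh0 hh1 => ?_⟩
  have hstencil := abs_stencil_sub_deriv_le hu fun y hy =>
    hM y (Metric.closedBall_subset_closedBall (by linarith) hy)
  have hdiv : (1 / (12 * h)) * (25 * u (x + 2 * h) - 48 * u (x + h) + 36 * u x
      - 16 * u (x - h) + 3 * u (x - 2 * h)) - deriv u (x + 2 * h)
      = (25 * u (x + 2 * h) - 48 * u (x + h) + 36 * u x - 16 * u (x - h) + 3 * u (x - 2 * h)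
        - 12 * h * deriv u (x + 2 * h)) / (12 * h) := by
    field_simp [abs_pos.mp hh0]
  rw [hdiv, abs_div, abs_mul, abs_of_pos (by norm_num : (0 : ℝ) < 12),
    div_le_iff₀ (mul_pos (by norm_num) hh0), ← (by decide : Even 4).pow_abs]
  calc _ ≤ 68 * M * |h| ^ 5 := hstencil
    _ ≤ (6 * M + 1) * |h| ^ 4 * (12 * |h|) := by nlinarith [pow_pos hh0 5]
end
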